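/- For any signed graph (G,Y), any K with 0 ≤ K ≤ |E|, and any active learning algorithm that queries at most a fraction α ∈ [0,1] of the edges of G and then predicts the remaining edges, there is a randomized labeling Y with Δ₂(Y) ≤ K (always) such that the expected number of mistakes on the unqueried edges is at least (1−α)·K/2. -/

import Mathlib

/-!
Once `e ∉ Q` lies in the planted set `F`, the prediction for `e` does not depend on the sign
`ε e`, and flipping that sign turns right predictions into wrong ones and back, so the prediction
is wrong for exactly half of the sign vectors. Every edge lies in a fraction `K / |E|` of the
`K`-subsets of `E` and at least `(1 - α)|E|` edges are unqueried, so the expected number of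
mistakes is at least `(1 - α)K/2`. The bound `Δ₂ ≤ K` is witnessed by the one-cluster
clustering, whose disagreements are the `-1` edges, all of which lie in `F`.
-/

open scoped Classical

/-- Cost of a clustering `f` for a Boolean edge labeling (`true` = +1, `false` = −1). -/
noncomputable def clusterCostB {V : Type*} [Fintype V] {β : Type*}
    (G : SimpleGraph V) (Y : Sym2 V → Bool) (f : V → β) : ℕ :=
  (G.edgeFinset.filter fun e =>
    (Y e = false ∧ Sym2.lift ⟨fun u v => f u = f v, fun _ _ => propext eq_comm⟩ e) ∨
    (Y e = true ∧ ¬ Sym2.lift ⟨fun u v => f u = f v, fun _ _ => propext eq_comm⟩ e)).card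

/-- Two-cluster correlation clustering index Δ₂(Y) for Boolean labelings. -/
noncomputable def ccIndex2B {V : Type*} [Fintype V] (G : SimpleGraph V) (Y : Sym2 V → Bool) : ℕ :=
  sInf {c | ∃ f : V → Bool, clusterCostB G Y f = c}

open Finset

theorem clusterCostB_const {V β : Type*} [Fintype V] (G : SimpleGraph V) (Y : Sym2 V → Bool)
    (b : β) : clusterCostB G Y (fun _ : V => b) = #{e ∈ G.edgeFinset | Y e = false} := by
  unfold clusterCostB
  congr 1
  refine filter_congr fun e _ => ?_
  induction e using Sym2.ind
  simp

section Flip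

variable {ι : Type*} [DecidableEq ι]

def flipAt (a : ι) (ε : ι → Bool) : ι → Bool := Function.update ε a (!ε a)

theorem flipAt_involutive (a : ι) : Function.Involutive (flipAt a) := fun ε => by
  simp [flipAt]

theorem two_mul_card_filter_ne_apply [Fintype ι] {a : ι} {g : (ι → Bool) → Bool}
    (hg : ∀ ε, g (flipAt a ε) = g ε) :
    2 * #{ε | g ε ≠ ε a} = Fintype.card (ι → Bool) := by
  have hhalves : #{ε | g ε ≠ ε a} = #{ε | ¬g ε ≠ ε a} :=
    card_bijective (flipAt a) (flipAt_involutive a).bijective fun ε => by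
      simp only [mem_filter, mem_univ, true_and, hg]
      simp only [flipAt, Function.update_self]
      cases g ε <;> cases ε a <;> simp
  rw [two_mul]
  nth_rewrite 2 [hhalves]
  rw [card_filter_add_card_filter_not, card_univ]

end Flip

theorem card_filter_mem_powersetCard_mul_card {α : Type*} [DecidableEq α] {E : Finset α} {a : α}
    (ha : a ∈ E) (K : ℕ) : #{F ∈ E.powersetCard K | a ∈ F} * #E = K * (#E).choose K := by
  cases K with
  | zero => simp
  | succ k =>
    have hcount := card_filter_powersetCard_subset {a} E (k + 1) (by simpa) (by simp)
    simp only [singleton_subset_iff, card_singleton, Nat.add_sub_cancel] at hcount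
    obtain ⟨n, hn⟩ := Nat.exists_eq_add_one.mpr (card_pos.mpr ⟨a, ha⟩)
    rw [hcount, hn, Nat.add_sub_cancel, mul_comm, Nat.add_one_mul_choose_eq, mul_comm]

section Planted

variable {α : Type*} [DecidableEq α]

def plantedLabeling (F : Finset α) (ε : α → Bool) : α → Bool :=
  fun e => if e ∈ F then ε e else true

theorem card_filter_plantedLabeling_eq_false_le (S F : Finset α) (ε : α → Bool) :
    #{e ∈ S | plantedLabeling F ε e = false} ≤ #F := by
  refine card_le_card fun e he => ?_
  by_contra heF
  simp [plantedLabeling, heF] at he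

theorem ccIndex2B_plantedLabeling_le {V : Type*} [Fintype V] (G : SimpleGraph V)
    (F : Finset (Sym2 V)) (ε : Sym2 V → Bool) : ccIndex2B G (plantedLabeling F ε) ≤ #F :=
  calc ccIndex2B G (plantedLabeling F ε)
      ≤ clusterCostB G (plantedLabeling F ε) (fun _ => true) := Nat.sInf_le ⟨_, rfl⟩
    _ = #{e ∈ G.edgeFinset | plantedLabeling F ε e = false} := clusterCostB_const G _ true
    _ ≤ #F := card_filter_plantedLabeling_eq_false_le _ F ε

variable [Fintype α] {Q : Finset α} {A : (α → Bool) → α → Bool}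

theorem two_mul_card_filter_mistake {F : Finset α} {a : α} (haF : a ∈ F) (haQ : a ∉ Q)
    (hA : ∀ Y₁ Y₂ : α → Bool, (∀ e ∈ Q, Y₁ e = Y₂ e) → A Y₁ = A Y₂) :
    2 * #{ε | A (plantedLabeling F ε) a ≠ plantedLabeling F ε a} = Fintype.card (α → Bool) := by
  have hflip : ∀ ε, A (plantedLabeling F (flipAt a ε)) = A (plantedLabeling F ε) := fun ε =>
    hA _ _ fun e he => by
      have hea : e ≠ a := ne_of_mem_of_not_mem he haQ
      simp [plantedLabeling, flipAt, Function.update_of_ne hea]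
  simp only [plantedLabeling, haF, if_true]
  exact two_mul_card_filter_ne_apply fun ε => congrFun (hflip ε) a

theorem card_sdiff_mul_choose_mul_card_le (E : Finset α) (K : ℕ)
    (hA : ∀ Y₁ Y₂ : α → Bool, (∀ e ∈ Q, Y₁ e = Y₂ e) → A Y₁ = A Y₂) :
    #(E \ Q) * (K * (#E).choose K) * Fintype.card (α → Bool) ≤
      2 * #E * ∑ F ∈ E.powersetCard K, ∑ ε : α → Bool,
        #{e ∈ E \ Q | A (plantedLabeling F ε) e ≠ plantedLabeling F ε e} := by
  have hswap : ∑ F ∈ E.powersetCard K, ∑ ε : α → Bool,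
        #{e ∈ E \ Q | A (plantedLabeling F ε) e ≠ plantedLabeling F ε e} =
      ∑ e ∈ E \ Q, ∑ F ∈ E.powersetCard K,
        #{ε | A (plantedLabeling F ε) e ≠ plantedLabeling F ε e} := by
    simp only [card_filter]
    rw [sum_congr rfl fun F _ => sum_comm, sum_comm]
  rw [hswap, mul_sum, mul_assoc #(E \ Q), ← smul_eq_mul, ← sum_const]
  refine sum_le_sum fun a ha => ?_
  obtain ⟨haE, haQ⟩ := mem_sdiff.mp ha
  calc K * (#E).choose K * Fintype.card (α → Bool)
      = #E * (#{F ∈ E.powersetCard K | a ∈ F} * Fintype.card (α → Bool)) := by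
        rw [← card_filter_mem_powersetCard_mul_card haE]; ring
    _ = #E * ∑ F ∈ E.powersetCard K with a ∈ F,
          2 * #{ε | A (plantedLabeling F ε) a ≠ plantedLabeling F ε a} := by
        rw [sum_congr rfl fun F hF => two_mul_card_filter_mistake (mem_filter.mp hF).2 haQ hA,
          sum_const, smul_eq_mul]
    _ ≤ #E * ∑ F ∈ E.powersetCard K,
          2 * #{ε | A (plantedLabeling F ε) a ≠ plantedLabeling F ε a} := by
        gcongr
        exact filter_subset _ _
    _ = 2 * #E * ∑ F ∈ E.powersetCard K,
          #{ε | A (plantedLabeling F ε) a ≠ plantedLabeling F ε a} := by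
        rw [← mul_sum]; ring

theorem one_sub_mul_div_two_le_expected_mistakes {E : Finset α} {K : ℕ} (hK : K ≤ #E) {ρ : ℝ}
    (hQ : (#Q : ℝ) ≤ ρ * #E) (hA : ∀ Y₁ Y₂ : α → Bool, (∀ e ∈ Q, Y₁ e = Y₂ e) → A Y₁ = A Y₂) :
    (1 - ρ) * K / 2 ≤
      (∑ F ∈ E.powersetCard K, ∑ ε : α → Bool,
          (#{e ∈ E \ Q | A (plantedLabeling F ε) e ≠ plantedLabeling F ε e} : ℝ)) /
        (#(E.powersetCard K) * Fintype.card (α → Bool)) := by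
  have hmistakes : (#(E \ Q) : ℝ) * (K * (#E).choose K) * Fintype.card (α → Bool) ≤
      2 * #E * ∑ F ∈ E.powersetCard K, ∑ ε : α → Bool,
        (#{e ∈ E \ Q | A (plantedLabeling F ε) e ≠ plantedLabeling F ε e} : ℝ) := by
    exact_mod_cast card_sdiff_mul_choose_mul_card_le E K hA
  set S := ∑ F ∈ E.powersetCard K, ∑ ε : α → Bool,
    (#{e ∈ E \ Q | A (plantedLabeling F ε) e ≠ plantedLabeling F ε e} : ℝ)
  have hunqueried : (1 - ρ) * #E ≤ #(E \ Q) := by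
    have : (#E : ℝ) ≤ #(E \ Q) + #Q := by exact_mod_cast card_le_card_sdiff_add_card
    linarith
  have hS : 0 ≤ S := sum_nonneg fun _ _ => sum_nonneg fun _ _ => Nat.cast_nonneg _
  have hC : 0 < (#E).choose K := Nat.choose_pos hK
  have hN : 0 < Fintype.card (α → Bool) := Fintype.card_pos
  rw [card_powersetCard, le_div_iff₀ (by positivity)]
  rcases (#E).eq_zero_or_pos with hE | hE
  · obtain rfl : K = 0 := by omega
    rwa [Nat.cast_zero, mul_zero, zero_div, zero_mul]
  refine le_of_mul_le_mul_left ?_ (by positivity : (0 : ℝ) < #E)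
  calc (#E : ℝ) * ((1 - ρ) * K / 2 * ((#E).choose K * Fintype.card (α → Bool)))
      = (1 - ρ) * #E * (K * (#E).choose K * Fintype.card (α → Bool)) / 2 := by ring
    _ ≤ #(E \ Q) * (K * (#E).choose K * Fintype.card (α → Bool)) / 2 := by
        have := mul_le_mul_of_nonneg_right hunqueried
          (by positivity : (0 : ℝ) ≤ K * (#E).choose K * Fintype.card (α → Bool))
        linarith
    _ ≤ #E * S := by linarith

end Planted

theorem stmt18_general {V : Type*} [Fintype V] (G : SimpleGraph V)
    (K : ℕ) (hK : K ≤ G.edgeFinset.card)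
    (α : ℝ)
    (Q : Finset (Sym2 V))
    (hQcard : (Q.card : ℝ) ≤ α * G.edgeFinset.card)
    (A : (Sym2 V → Bool) → Sym2 V → Bool)
    (hA : ∀ Y₁ Y₂ : Sym2 V → Bool, (∀ e ∈ Q, Y₁ e = Y₂ e) → A Y₁ = A Y₂) :
    (∀ F ∈ G.edgeFinset.powersetCard K, ∀ ε : Sym2 V → Bool,
        ccIndex2B G (fun e => if e ∈ F then ε e else true) ≤ K) ∧
    ((1 - α) * K / 2 ≤
      (∑ F ∈ G.edgeFinset.powersetCard K, ∑ ε : Sym2 V → Bool,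
          (((G.edgeFinset \ Q).filter fun e =>
            A (fun e' => if e' ∈ F then ε e' else true) e ≠
              (if e ∈ F then ε e else true)).card : ℝ)) /
        (((G.edgeFinset.powersetCard K).card : ℝ) *
          (Fintype.card (Sym2 V → Bool) : ℝ))) :=
  ⟨fun F hF ε => (ccIndex2B_plantedLabeling_le G F ε).trans (mem_powersetCard.mp hF).2.le,
    one_sub_mul_div_two_le_expected_mistakes hK hQcard hA⟩

/-- Active-learning lower bound. The randomized labeling: a uniform `K`-subset `F` of the
edges gets independent uniform ±1 labels, all other edges are `+1`. Every realization has
`Δ₂ ≤ K`, and any algorithm querying a set `Q` with `|Q| ≤ α|E|` (and whose predictions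
depend only on the labels of `Q`) makes at least `(1−α)K/2` expected mistakes on `E∖Q`. -/
theorem stmt18 {V : Type*} [Fintype V] (G : SimpleGraph V)
    (K : ℕ) (hK : K ≤ G.edgeFinset.card)
    (α : ℝ) (hα0 : 0 ≤ α) (hα1 : α ≤ 1)
    (Q : Finset (Sym2 V)) (hQ : Q ⊆ G.edgeFinset)
    (hQcard : (Q.card : ℝ) ≤ α * G.edgeFinset.card)
    (A : (Sym2 V → Bool) → Sym2 V → Bool)
    (hA : ∀ Y₁ Y₂ : Sym2 V → Bool, (∀ e ∈ Q, Y₁ e = Y₂ e) → A Y₁ = A Y₂) :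
    (∀ F ∈ G.edgeFinset.powersetCard K, ∀ ε : Sym2 V → Bool,
        ccIndex2B G (fun e => if e ∈ F then ε e else true) ≤ K) ∧
    ((1 - α) * K / 2 ≤
      (∑ F ∈ G.edgeFinset.powersetCard K, ∑ ε : Sym2 V → Bool,
          (((G.edgeFinset \ Q).filter fun e =>
            A (fun e' => if e' ∈ F then ε e' else true) e ≠
              (if e ∈ F then ε e else true)).card : ℝ)) /
        (((G.edgeFinset.powersetCard K).card : ℝ) *
          (Fintype.card (Sym2 V → Bool) : ℝ))) :=
  stmt18_general G K hK α Q hQcard A hA
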